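/- arXiv:0711.1691 — 2 statements merged into one kernel-verified Lean document; each statement's English description precedes it below -/
import Mathlib

section
/- Let c ≥ 1 and c' ≥ 1 be integers, and let m = (m_1,…,m_c) and m' = (m'_1,…,m'_{c'}) be sequences of positive real numbers. Then F(m ⋆ m') = F(m)·F(m') if and only if there exists a real number a > 0 such that m_i = a·i for all 1 ≤ i ≤ c and m'_j = a·j for all 1 ≤ j ≤ c'. -/
/-- `F(m) = (∏_{i=1}^c m_i)/c!` for a sequence given by `m : ℕ → ℝ` on indices `1,…,c`. -/
noncomputable def Fval (c : ℕ) (m : ℕ → ℝ) : ℝ :=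
  (∏ i ∈ Finset.Icc 1 c, m i) / (Nat.factorial c)

/-- Extend a sequence by the convention `m_0 = 0`. -/
def ext0 (m : ℕ → ℝ) : ℕ → ℝ := fun i => if i = 0 then 0 else m i

/-- The lower join `(m ⋆ m')_r = min{m_i + m'_j : i + j = r, 0 ≤ i ≤ c, 0 ≤ j ≤ c'}`,
with the convention `m_0 = m'_0 = 0`. -/
noncomputable def lowerJoin (c c' : ℕ) (m m' : ℕ → ℝ) : ℕ → ℝ := fun r =>
  sInf {x : ℝ | ∃ i j : ℕ, i + j = r ∧ i ≤ c ∧ j ≤ c' ∧ x = ext0 m i + ext0 m' j}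

/-!
Let `P(c, c') = ∏_{r=1}^{c+c'} (m ⋆ m')_r` and `B(c, c') = binom(c + c', c) ∏ m_i ∏ m'_j`, so that
`F(m ⋆ m') = F(m) F(m')` reads `P = B`. The top entry of `m ⋆ m'` is `m_c + m'_{c'}`, and each
lower entry is the minimum of the same entries of the two joins in which `m_c`, resp. `m'_{c'}`, is
dropped. Hence `P(c, c') ≤ m_c P(c - 1, c') + m'_{c'} P(c, c' - 1)`, and Pascal's rule gives `P ≤ B`
by induction. If `P = B`, every inequality in this induction is tight, so the two smaller joins agree
entrywise with `m ⋆ m'` below the top; comparing their top entries gives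
`m_{i-1} + m'_j = m_i + m'_{j-1}` for all `1 ≤ i ≤ c`, `1 ≤ j ≤ c'` (with `m_0 = m'_0 = 0`): both
sequences increase by the same constant step `a = m_1`.
-/

open Finset

lemma Finset.prod_eq_prod_iff_of_le_of_pos {ι R : Type*} [CommSemiring R] [PartialOrder R]
    [IsStrictOrderedRing R] {s : Finset ι} {f g : ι → R} (hf : ∀ i ∈ s, 0 < f i)
    (hfg : ∀ i ∈ s, f i ≤ g i) : ∏ i ∈ s, f i = ∏ i ∈ s, g i ↔ ∀ i ∈ s, f i = g i := by
  refine ⟨fun h i hi => ?_, prod_congr rfl⟩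
  by_contra hne
  exact (prod_lt_prod hf hfg ⟨i, hi, (hfg i hi).lt_of_ne hne⟩).ne h

lemma Fval_eq_pow {c : ℕ} {m : ℕ → ℝ} {a : ℝ} (hl : ∀ i, 1 ≤ i → i ≤ c → m i = a * i) :
    Fval c m = a ^ c := by
  have hprod : ∏ i ∈ Icc 1 c, m i = ∏ i ∈ Icc 1 c, a * (i : ℝ) :=
    prod_congr rfl fun i hi => hl i (mem_Icc.1 hi).1 (mem_Icc.1 hi).2
  rw [Fval, hprod, prod_mul_distrib, prod_const, Nat.card_Icc, Nat.add_sub_cancel,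
    ← Nat.cast_prod, ← Ico_add_one_right_eq_Icc, prod_Ico_id_eq_factorial,
    mul_div_cancel_right₀ _ (by positivity)]

section Ext0

variable {m : ℕ → ℝ} {a : ℝ} {c i : ℕ}

@[simp] lemma ext0_zero (m : ℕ → ℝ) : ext0 m 0 = 0 := rfl

@[simp] lemma ext0_succ (m : ℕ → ℝ) (i : ℕ) : ext0 m (i + 1) = m (i + 1) := rfl

lemma ext0_of_ne_zero (m : ℕ → ℝ) (h : i ≠ 0) : ext0 m i = m i := if_neg h

lemma ext0_pos (hm : ∀ i, 1 ≤ i → i ≤ c → 0 < m i) (h1 : 1 ≤ i) (hi : i ≤ c) :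
    0 < ext0 m i := by
  cases i with
  | zero => omega
  | succ i => exact hm _ h1 hi

lemma ext0_nonneg (hm : ∀ i, 1 ≤ i → i ≤ c → 0 < m i) (hi : i ≤ c) : 0 ≤ ext0 m i := by
  cases i with
  | zero => simp
  | succ i => exact (ext0_pos hm (by omega) hi).le

lemma ext0_eq_mul (hl : ∀ i, 1 ≤ i → i ≤ c → m i = a * i) (hi : i ≤ c) : ext0 m i = a * i := by
  cases i with
  | zero => simp
  | succ i => exact hl _ (by omega) hi

lemma eq_mul_of_succ_eq_ext0_add (h : ∀ i < c, m (i + 1) = ext0 m i + a) :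
    ∀ i, 1 ≤ i → i ≤ c → m i = a * i := by
  have hext : ∀ i ≤ c, ext0 m i = a * i := by
    intro i hi
    induction i with
    | zero => simp
    | succ i ih => rw [ext0_succ, h i (by omega), ih (by omega)]; push_cast; ring
  intro i h1 hi
  obtain ⟨i, rfl⟩ := Nat.exists_eq_add_of_le' h1
  exact hext _ hi

end Ext0

section LowerJoin

variable (m m' : ℕ → ℝ) {c c' r i j : ℕ}

lemma finite_lowerJoin_set :
    {x : ℝ | ∃ i j : ℕ, i + j = r ∧ i ≤ c ∧ j ≤ c' ∧ x = ext0 m i + ext0 m' j}.Finite := by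
  refine ((Set.finite_Iic c).prod (Set.finite_Iic c')).image
    (fun p => ext0 m p.1 + ext0 m' p.2) |>.subset ?_
  rintro x ⟨i, j, -, hi, hj, rfl⟩
  exact ⟨(i, j), ⟨hi, hj⟩, rfl⟩

lemma lowerJoin_le (hij : i + j = r) (hi : i ≤ c) (hj : j ≤ c') :
    lowerJoin c c' m m' r ≤ ext0 m i + ext0 m' j :=
  csInf_le (finite_lowerJoin_set m m').bddBelow ⟨i, j, hij, hi, hj, rfl⟩

lemma exists_lowerJoin_eq (hr : r ≤ c + c') :
    ∃ i j, i + j = r ∧ i ≤ c ∧ j ≤ c' ∧ lowerJoin c c' m m' r = ext0 m i + ext0 m' j := by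
  have hne : {x : ℝ | ∃ i j : ℕ, i + j = r ∧ i ≤ c ∧ j ≤ c' ∧
      x = ext0 m i + ext0 m' j}.Nonempty :=
    ⟨_, min r c, r - min r c, by omega, min_le_right _ _, by omega, rfl⟩
  exact hne.csInf_mem (finite_lowerJoin_set m m')

lemma lowerJoin_top : lowerJoin c c' m m' (c + c') = ext0 m c + ext0 m' c' := by
  obtain ⟨i, j, hij, hi, hj, h⟩ := exists_lowerJoin_eq m m' (le_refl (c + c'))
  obtain ⟨rfl, rfl⟩ : i = c ∧ j = c' := by omega
  exact h

lemma lowerJoin_zero_left (hr : r ≤ c') : lowerJoin 0 c' m m' r = ext0 m' r := by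
  obtain ⟨i, j, hij, hi, -, h⟩ := exists_lowerJoin_eq m m' (by omega : r ≤ 0 + c')
  obtain ⟨rfl, rfl⟩ : i = 0 ∧ j = r := by omega
  simpa using h

lemma lowerJoin_zero_right (hr : r ≤ c) : lowerJoin c 0 m m' r = ext0 m r := by
  obtain ⟨i, j, hij, -, hj, h⟩ := exists_lowerJoin_eq m m' (by omega : r ≤ c + 0)
  obtain ⟨rfl, rfl⟩ : i = r ∧ j = 0 := by omega
  simpa using h

/-- Below the top index, a minimising split can always lower one of the two lengths. -/
lemma lowerJoin_succ_succ (hr : r ≤ c + c' + 1) :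
    lowerJoin (c + 1) (c' + 1) m m' r =
      min (lowerJoin c (c' + 1) m m' r) (lowerJoin (c + 1) c' m m' r) := by
  apply le_antisymm
  · apply le_min
    · obtain ⟨i, j, hij, hi, hj, h⟩ := exists_lowerJoin_eq m m' (by omega : r ≤ c + (c' + 1))
      exact h ▸ lowerJoin_le m m' hij (by omega) hj
    · obtain ⟨i, j, hij, hi, hj, h⟩ := exists_lowerJoin_eq m m' (by omega : r ≤ (c + 1) + c')
      exact h ▸ lowerJoin_le m m' hij hi (by omega)
  · obtain ⟨i, j, hij, hi, hj, h⟩ := exists_lowerJoin_eq m m' (by omega : r ≤ (c + 1) + (c' + 1))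
    rw [h]
    rcases (by omega : i ≤ c ∨ j ≤ c') with hi' | hj'
    · exact min_le_of_left_le (lowerJoin_le m m' hij hi' hj)
    · exact min_le_of_right_le (lowerJoin_le m m' hij hi hj')

lemma lowerJoin_succ_succ_le_left (hr : r ≤ c + c' + 1) :
    lowerJoin (c + 1) (c' + 1) m m' r ≤ lowerJoin c (c' + 1) m m' r :=
  lowerJoin_succ_succ m m' hr ▸ min_le_left _ _

lemma lowerJoin_succ_succ_le_right (hr : r ≤ c + c' + 1) :
    lowerJoin (c + 1) (c' + 1) m m' r ≤ lowerJoin (c + 1) c' m m' r :=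
  lowerJoin_succ_succ m m' hr ▸ min_le_right _ _

variable {m m'}

lemma lowerJoin_pos (hm : ∀ i, 1 ≤ i → i ≤ c → 0 < m i) (hm' : ∀ j, 1 ≤ j → j ≤ c' → 0 < m' j)
    (h1 : 1 ≤ r) (h2 : r ≤ c + c') : 0 < lowerJoin c c' m m' r := by
  obtain ⟨i, j, hij, hi, hj, h⟩ := exists_lowerJoin_eq m m' h2
  rw [h]
  rcases (by omega : 1 ≤ i ∨ 1 ≤ j) with hi1 | hj1
  · linarith [ext0_pos hm hi1 hi, ext0_nonneg hm' hj]
  · linarith [ext0_nonneg hm hi, ext0_pos hm' hj1 hj]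

lemma lowerJoin_eq_mul {a : ℝ} (hl : ∀ i, 1 ≤ i → i ≤ c → m i = a * i)
    (hl' : ∀ j, 1 ≤ j → j ≤ c' → m' j = a * j) (hr : r ≤ c + c') :
    lowerJoin c c' m m' r = a * r := by
  obtain ⟨i, j, rfl, hi, hj, h⟩ := exists_lowerJoin_eq m m' hr
  rw [h, ext0_eq_mul hl hi, ext0_eq_mul hl' hj]
  push_cast; ring

end LowerJoin

section Products

variable (m m' : ℕ → ℝ) {c c' : ℕ}

noncomputable def lowerJoinProd (c c' : ℕ) : ℝ := ∏ r ∈ Icc 1 (c + c'), lowerJoin c c' m m' r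

noncomputable def lowerJoinBound (c c' : ℕ) : ℝ :=
  (c + c').choose c * ((∏ i ∈ Icc 1 c, m i) * ∏ j ∈ Icc 1 c', m' j)

lemma Fval_mul_Fval :
    Fval c m * Fval c' m' = lowerJoinBound m m' c c' / (c + c').factorial := by
  have h := Nat.add_choose_mul_factorial_mul_factorial c' c
  rw [add_comm c'] at h
  have hchoose : (0 : ℝ) < (c + c').choose c := mod_cast Nat.choose_pos (Nat.le_add_right c c')
  rw [Fval, Fval, lowerJoinBound, ← h]
  push_cast
  field_simp

lemma lowerJoinProd_zero_left : lowerJoinProd m m' 0 c' = lowerJoinBound m m' 0 c' := by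
  rw [lowerJoinProd, lowerJoinBound, zero_add]
  simp only [Nat.choose_zero_right, Nat.cast_one, Icc_eq_empty_of_lt zero_lt_one, prod_empty,
    one_mul]
  refine prod_congr rfl fun r hr => ?_
  obtain ⟨hr₁, hr₂⟩ := mem_Icc.1 hr
  rw [lowerJoin_zero_left m m' hr₂, ext0_of_ne_zero m' (by omega)]

lemma lowerJoinProd_zero_right : lowerJoinProd m m' c 0 = lowerJoinBound m m' c 0 := by
  rw [lowerJoinProd, lowerJoinBound, add_zero]
  simp only [Nat.choose_self, Nat.cast_one, Icc_eq_empty_of_lt zero_lt_one, prod_empty,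
    one_mul, mul_one]
  refine prod_congr rfl fun r hr => ?_
  obtain ⟨hr₁, hr₂⟩ := mem_Icc.1 hr
  rw [lowerJoin_zero_right m m' hr₂, ext0_of_ne_zero m (by omega)]

lemma lowerJoinBound_succ_succ :
    lowerJoinBound m m' (c + 1) (c' + 1) =
      m (c + 1) * lowerJoinBound m m' c (c' + 1) +
        m' (c' + 1) * lowerJoinBound m m' (c + 1) c' := by
  simp only [lowerJoinBound, prod_Icc_succ_top (Nat.le_add_left 1 _)]
  rw [show c + 1 + (c' + 1) = c + c' + 1 + 1 by ring, Nat.choose_succ_succ',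
    Nat.add_right_comm c 1 c', ← add_assoc]
  push_cast
  ring

lemma lowerJoinProd_succ_succ :
    lowerJoinProd m m' (c + 1) (c' + 1) =
      (∏ r ∈ Icc 1 (c + c' + 1), lowerJoin (c + 1) (c' + 1) m m' r) *
        (m (c + 1) + m' (c' + 1)) := by
  have htop := lowerJoin_top m m' (c := c + 1) (c' := c' + 1)
  rw [show c + 1 + (c' + 1) = c + c' + 1 + 1 by ring] at htop
  rw [lowerJoinProd, show c + 1 + (c' + 1) = c + c' + 1 + 1 by ring,
    prod_Icc_succ_top (Nat.le_add_left 1 _), htop, ext0_succ, ext0_succ]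

variable {m m'}

lemma prod_lowerJoin_succ_succ_le_left (hm : ∀ i, 1 ≤ i → i ≤ c + 1 → 0 < m i)
    (hm' : ∀ j, 1 ≤ j → j ≤ c' + 1 → 0 < m' j) :
    ∏ r ∈ Icc 1 (c + c' + 1), lowerJoin (c + 1) (c' + 1) m m' r ≤ lowerJoinProd m m' c (c' + 1) :=
  prod_le_prod (fun r hr => (lowerJoin_pos hm hm' (mem_Icc.1 hr).1 (by grind)).le)
    fun r hr => lowerJoin_succ_succ_le_left m m' (mem_Icc.1 hr).2

lemma prod_lowerJoin_succ_succ_le_right (hm : ∀ i, 1 ≤ i → i ≤ c + 1 → 0 < m i)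
    (hm' : ∀ j, 1 ≤ j → j ≤ c' + 1 → 0 < m' j) :
    ∏ r ∈ Icc 1 (c + c' + 1), lowerJoin (c + 1) (c' + 1) m m' r ≤
      lowerJoinProd m m' (c + 1) c' := by
  rw [lowerJoinProd, Nat.add_right_comm c 1 c']
  exact prod_le_prod (fun r hr => (lowerJoin_pos hm hm' (mem_Icc.1 hr).1 (by grind)).le)
    fun r hr => lowerJoin_succ_succ_le_right m m' (mem_Icc.1 hr).2

lemma lowerJoinProd_le_lowerJoinBound (hm : ∀ i, 1 ≤ i → i ≤ c → 0 < m i)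
    (hm' : ∀ j, 1 ≤ j → j ≤ c' → 0 < m' j) :
    lowerJoinProd m m' c c' ≤ lowerJoinBound m m' c c' := by
  induction c generalizing c' with
  | zero => exact (lowerJoinProd_zero_left m m').le
  | succ c ihc =>
    induction c' with
    | zero => exact (lowerJoinProd_zero_right m m').le
    | succ c' ihc' =>
      have hP₁ := ihc (fun i h₁ h₂ => hm i h₁ (by omega)) hm'
      have hP₂ := ihc' fun j h₁ h₂ => hm' j h₁ (by omega)
      rw [lowerJoinProd_succ_succ, lowerJoinBound_succ_succ, mul_add, mul_comm, mul_comm _ (m' _)]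
      exact add_le_add
        (mul_le_mul_of_nonneg_left ((prod_lowerJoin_succ_succ_le_left hm hm').trans hP₁)
          (hm _ (by omega) le_rfl).le)
        (mul_le_mul_of_nonneg_left ((prod_lowerJoin_succ_succ_le_right hm hm').trans hP₂)
          (hm' _ (by omega) le_rfl).le)

lemma lowerJoinProd_eq_of_succ_succ (hm : ∀ i, 1 ≤ i → i ≤ c + 1 → 0 < m i)
    (hm' : ∀ j, 1 ≤ j → j ≤ c' + 1 → 0 < m' j)
    (h : lowerJoinProd m m' (c + 1) (c' + 1) = lowerJoinBound m m' (c + 1) (c' + 1)) :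
    (∏ r ∈ Icc 1 (c + c' + 1), lowerJoin (c + 1) (c' + 1) m m' r = lowerJoinProd m m' c (c' + 1) ∧
      lowerJoinProd m m' c (c' + 1) = lowerJoinBound m m' c (c' + 1)) ∧
    (∏ r ∈ Icc 1 (c + c' + 1), lowerJoin (c + 1) (c' + 1) m m' r = lowerJoinProd m m' (c + 1) c' ∧
      lowerJoinProd m m' (c + 1) c' = lowerJoinBound m m' (c + 1) c') := by
  set Q := ∏ r ∈ Icc 1 (c + c' + 1), lowerJoin (c + 1) (c' + 1) m m' r
  have hQ₁ : Q ≤ _ := prod_lowerJoin_succ_succ_le_left hm hm'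
  have hQ₂ : Q ≤ _ := prod_lowerJoin_succ_succ_le_right hm hm'
  have hP₁ := lowerJoinProd_le_lowerJoinBound (c := c) (fun i h₁ h₂ => hm i h₁ (by omega)) hm'
  have hP₂ := lowerJoinProd_le_lowerJoinBound (c' := c') hm fun j h₁ h₂ => hm' j h₁ (by omega)
  have ha := hm (c + 1) (by omega) le_rfl
  have hb := hm' (c' + 1) (by omega) le_rfl
  rw [lowerJoinProd_succ_succ, lowerJoinBound_succ_succ] at h
  -- `h` says `a (B₁ - Q) + b (B₂ - Q) = 0` with both summands nonnegative
  obtain ⟨h₁, h₂⟩ := (add_eq_zero_iff_of_nonneg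
    (mul_nonneg ha.le (sub_nonneg.2 (hQ₁.trans hP₁)))
    (mul_nonneg hb.le (sub_nonneg.2 (hQ₂.trans hP₂)))).1 (by linarith)
  rw [mul_eq_zero, sub_eq_zero] at h₁ h₂
  have hB₁ := h₁.resolve_left ha.ne'
  have hB₂ := h₂.resolve_left hb.ne'
  exact ⟨⟨hQ₁.antisymm (hP₁.trans hB₁.le), hP₁.antisymm (hB₁ ▸ hQ₁)⟩,
    hQ₂.antisymm (hP₂.trans hB₂.le), hP₂.antisymm (hB₂ ▸ hQ₂)⟩

lemma ext0_add_eq_of_lowerJoinProd_succ_succ_eq (hm : ∀ i, 1 ≤ i → i ≤ c + 1 → 0 < m i)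
    (hm' : ∀ j, 1 ≤ j → j ≤ c' + 1 → 0 < m' j)
    (h : lowerJoinProd m m' (c + 1) (c' + 1) = lowerJoinBound m m' (c + 1) (c' + 1)) :
    ext0 m c + m' (c' + 1) = m (c + 1) + ext0 m' c' := by
  obtain ⟨⟨hQ₁, -⟩, hQ₂, -⟩ := lowerJoinProd_eq_of_succ_succ hm hm' h
  have hpos : ∀ r ∈ Icc 1 (c + c' + 1), 0 < lowerJoin (c + 1) (c' + 1) m m' r :=
    fun r hr => lowerJoin_pos hm hm' (mem_Icc.1 hr).1 (by grind)
  have htop : c + c' + 1 ∈ Icc 1 (c + c' + 1) := mem_Icc.2 ⟨by omega, le_rfl⟩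
  rw [lowerJoinProd, ← add_assoc, prod_eq_prod_iff_of_le_of_pos hpos
    fun r hr => lowerJoin_succ_succ_le_left m m' (mem_Icc.1 hr).2] at hQ₁
  rw [lowerJoinProd, Nat.add_right_comm c 1 c', prod_eq_prod_iff_of_le_of_pos hpos
    fun r hr => lowerJoin_succ_succ_le_right m m' (mem_Icc.1 hr).2] at hQ₂
  have h₁ := lowerJoin_top m m' (c := c) (c' := c' + 1)
  have h₂ := lowerJoin_top m m' (c := c + 1) (c' := c')
  rw [← add_assoc, ← hQ₁ _ htop] at h₁
  rw [Nat.add_right_comm, ← hQ₂ _ htop] at h₂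
  simpa using h₁.symm.trans h₂

lemma ext0_add_eq_of_lowerJoinProd_eq (hm : ∀ i, 1 ≤ i → i ≤ c → 0 < m i)
    (hm' : ∀ j, 1 ≤ j → j ≤ c' → 0 < m' j)
    (h : lowerJoinProd m m' c c' = lowerJoinBound m m' c c') :
    ∀ i < c, ∀ j < c', ext0 m i + m' (j + 1) = m (i + 1) + ext0 m' j := by
  induction c generalizing c' with
  | zero => simp
  | succ c ihc =>
    induction c' with
    | zero => simp
    | succ c' ihc' =>
      obtain ⟨⟨-, h₁⟩, -, h₂⟩ := lowerJoinProd_eq_of_succ_succ hm hm' h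
      intro i hi j hj
      rcases (by omega : i < c ∨ j < c' ∨ (i = c ∧ j = c')) with hi | hj | ⟨rfl, rfl⟩
      · exact ihc (fun i h₁ h₂ => hm i h₁ (by omega)) hm' h₁ i hi j hj
      · exact ihc' (fun j h₁ h₂ => hm' j h₁ (by omega)) h₂ i hi j hj
      · exact ext0_add_eq_of_lowerJoinProd_succ_succ_eq hm hm' h

end Products

theorem lowerJoin_Fval_eq_iff (c c' : ℕ) (hc : 1 ≤ c) (hc' : 1 ≤ c') (m m' : ℕ → ℝ)
    (hm : ∀ i, 1 ≤ i → i ≤ c → 0 < m i) (hm' : ∀ j, 1 ≤ j → j ≤ c' → 0 < m' j) :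
    Fval (c + c') (lowerJoin c c' m m') = Fval c m * Fval c' m' ↔
      ∃ a : ℝ, 0 < a ∧ (∀ i, 1 ≤ i → i ≤ c → m i = a * i) ∧
        (∀ j, 1 ≤ j → j ≤ c' → m' j = a * j) := by
  constructor
  · intro h
    rw [Fval, Fval_mul_Fval, div_left_inj' (by positivity)] at h
    have hstep := ext0_add_eq_of_lowerJoinProd_eq hm hm' h
    have h₀ : m' 1 = m 1 := by simpa using hstep 0 hc 0 hc'
    refine ⟨m 1, hm 1 le_rfl hc, eq_mul_of_succ_eq_ext0_add fun i hi => ?_,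
      eq_mul_of_succ_eq_ext0_add fun j hj => ?_⟩
    · simpa [h₀] using (hstep i hi 0 hc').symm
    · simpa [add_comm] using hstep 0 hc j hj
  · rintro ⟨a, -, hl, hl'⟩
    rw [Fval_eq_pow fun r _ hr => lowerJoin_eq_mul hl hl' hr, Fval_eq_pow hl, Fval_eq_pow hl',
      pow_add]
end

section
/- Let K and K' be simplicial complexes on disjoint finite vertex sets. If K satisfies the Taylor lower bound and K' satisfies the Taylor lower bound, then the join K ⋆ K' satisfies the Taylor lower bound. -/
open Finset

/-- A simplicial complex on a finite vertex set: a collection of finite subsets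
(faces) of the vertex set, closed under inclusion, containing every singleton. -/
structure SC (α : Type*) [DecidableEq α] where
  verts : Finset α
  faces : Finset (Finset α)
  subset_verts : ∀ F ∈ faces, F ⊆ verts
  down_closed : ∀ F ∈ faces, ∀ G, G ⊆ F → G ∈ faces
  singleton_mem : ∀ v ∈ verts, {v} ∈ faces

namespace SC

variable {α : Type*} [DecidableEq α]

/-- `dimP1 K = dim K + 1`: the maximal number of vertices of a face. -/
def dimP1 (K : SC α) : ℕ := K.faces.sup Finset.card

/-- The number of faces with exactly `j` vertices, i.e. `f_{j-1}(K)`. -/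
def fCard (K : SC α) (j : ℕ) : ℕ := (K.faces.filter (fun F => F.card = j)).card

/-- The minimal non-faces of `K`: subsets of the vertex set which are not faces,
all of whose proper subsets are faces. -/
def minNonFaces (K : SC α) : Finset (Finset α) :=
  K.verts.powerset.filter (fun F => F ∉ K.faces ∧ ∀ G ∈ F.powerset, G ≠ F → G ∈ K.faces)

/-- The `i`-th minimal Taylor shift `m̃_i(K)`: the minimal number of vertices covered by
a set of exactly `i` minimal non-faces of `K`. -/
noncomputable def mT (K : SC α) (i : ℕ) : ℕ :=
  sInf {n | ∃ T ⊆ K.minNonFaces, T.card = i ∧ (T.sup id).card = n}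

/-- The `i`-th maximal Taylor shift `M̃_i(K)`: the maximal number of vertices covered by
a set of exactly `i` minimal non-faces of `K`. -/
noncomputable def MT (K : SC α) (i : ℕ) : ℕ :=
  sSup {n | ∃ T ⊆ K.minNonFaces, T.card = i ∧ (T.sup id).card = n}

/-- The conjectured Taylor upper bound `(∏_{i=1}^{n-d} M̃_i(K))/(n-d)!` on `f_{d-1}(K)`. -/
noncomputable def taylorUBval (K : SC α) : ℚ :=
  (∏ i ∈ Finset.Icc 1 (K.verts.card - K.dimP1), (K.MT i : ℚ)) /
    (Nat.factorial (K.verts.card - K.dimP1))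

/-- The conjectured Taylor lower bound `(∏_{i=1}^{n-d} m̃_i(K))/(n-d)!` on `f_{d-1}(K)`. -/
noncomputable def taylorLBval (K : SC α) : ℚ :=
  (∏ i ∈ Finset.Icc 1 (K.verts.card - K.dimP1), (K.mT i : ℚ)) /
    (Nat.factorial (K.verts.card - K.dimP1))

/-- `K` satisfies the Taylor upper bound: `f_{d-1}(K) ≤ (∏_{i=1}^{n-d} M̃_i(K))/(n-d)!`. -/
def TaylorUB (K : SC α) : Prop := (K.fCard K.dimP1 : ℚ) ≤ K.taylorUBval

/-- `K` satisfies the Taylor lower bound: `f_{d-1}(K) ≥ (∏_{i=1}^{n-d} m̃_i(K))/(n-d)!`. -/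
def TaylorLB (K : SC α) : Prop := K.taylorLBval ≤ (K.fCard K.dimP1 : ℚ)

/-- The induced subcomplex `K[W]`: the faces of `K` contained in `W`. -/
def induced (K : SC α) (W : Finset α) : SC α where
  verts := K.verts ∩ W
  faces := K.faces.filter (fun F => F ⊆ W)
  subset_verts := by
    intro F hF
    simp only [mem_filter] at hF
    exact subset_inter (K.subset_verts F hF.1) hF.2
  down_closed := by
    intro F hF G hG
    simp only [mem_filter] at hF ⊢
    exact ⟨K.down_closed F hF.1 G hG, hG.trans hF.2⟩
  singleton_mem := by
    intro v hv
    simp only [mem_inter] at hv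
    simp only [mem_filter, singleton_subset_iff]
    exact ⟨K.singleton_mem v hv.1, hv.2⟩

end SC

/-!
The minimal non-faces of `J = K ⋆ K'` include those of `K` and of `K'`, which are disjoint
families, so uniting `a` minimal non-faces of `K` with `b` of `K'` gives
`m̃_{a+b}(J) ≤ m̃_a(K) + m̃_b(K')`. Peeling off the last factor and applying Pascal's rule turns
this into `∏_{i ≤ m+m'} m̃_i(J) ≤ C(m+m', m) ∏_{a ≤ m} m̃_a(K) ∏_{b ≤ m'} m̃_b(K')` with
`m = n - d`, `m' = n' - d'`; since `C(m+m', m) / (m+m')! = 1 / (m! m'!)`, the Taylor lower bound of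
`J` is at most the product of those of `K` and `K'`. Facets of `J` are the unions of a facet of
`K` and one of `K'`, so `f_{d+d'-1}(J) = f_{d-1}(K) f_{d'-1}(K')`, and the bounds multiply.
-/

theorem Finset.prod_Icc_le_choose_mul_prod_mul_prod {x y z : ℕ → ℕ} (hx : x 0 = 0)
    (hy : y 0 = 0) {m m' : ℕ} (hz : ∀ a ≤ m, ∀ b ≤ m', z (a + b) ≤ x a + y b) :
    ∏ i ∈ Icc 1 (m + m'), z i ≤
      (m + m').choose m * (∏ a ∈ Icc 1 m, x a) * ∏ b ∈ Icc 1 m', y b := by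
  induction m generalizing m' with
  | zero =>
    simpa using prod_le_prod' fun i hi => by simpa [hx] using hz 0 le_rfl i (mem_Icc.1 hi).2
  | succ m ihm =>
    induction m' with
    | zero =>
      simpa using prod_le_prod' fun i hi => by simpa [hy] using hz i (mem_Icc.1 hi).2 0 le_rfl
    | succ m' ihm' =>
      have hleft := ihm (m' := m' + 1) fun a ha b hb => hz a (by omega) b hb
      have hright := ihm' fun a ha b hb => hz a ha b (by omega)
      have htop := hz (m + 1) le_rfl (m' + 1) le_rfl
      rw [prod_Icc_succ_top (by omega) y] at hleft
      rw [show m + 1 + m' = m + (m' + 1) by omega, prod_Icc_succ_top (by omega) x] at hright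
      rw [show m + 1 + (m' + 1) = m + (m' + 1) + 1 by omega] at htop ⊢
      rw [Nat.choose_succ_succ, prod_Icc_succ_top (by omega) z, prod_Icc_succ_top (by omega) x,
        prod_Icc_succ_top (by omega) y]
      set P := ∏ i ∈ Icc 1 (m + (m' + 1)), z i
      calc P * z (m + (m' + 1) + 1) ≤ P * (x (m + 1) + y (m' + 1)) := Nat.mul_le_mul_left _ htop
        _ = P * x (m + 1) + P * y (m' + 1) := mul_add _ _ _
        _ ≤ _ := add_le_add (Nat.mul_le_mul_right _ hleft) (Nat.mul_le_mul_right _ hright)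
        _ = _ := by ring

namespace SC

variable {α : Type*} [DecidableEq α]

section Invariants

variable {K : SC α}

theorem mem_minNonFaces {F : Finset α} :
    F ∈ K.minNonFaces ↔ F ⊆ K.verts ∧ F ∉ K.faces ∧ ∀ G ⊆ F, G ≠ F → G ∈ K.faces := by
  simp only [minNonFaces, mem_filter, mem_powerset]

theorem exists_minNonFaces_subset {S : Finset α} (hS : S ⊆ K.verts) (hSK : S ∉ K.faces) :
    ∃ N ⊆ S, N ∈ K.minNonFaces := by
  obtain ⟨N, hN, hNmin⟩ :=
    (S.powerset.filter (· ∉ K.faces)).exists_min_image card ⟨S, by simp [hSK]⟩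
  rw [mem_filter, mem_powerset] at hN
  refine ⟨N, hN.1, mem_minNonFaces.2 ⟨hN.1.trans hS, hN.2, fun G hGN hne => ?_⟩⟩
  by_contra hG
  have := hNmin G (by simp [hGN.trans hN.1, hG])
  exact this.not_gt (card_lt_card (ssubset_of_subset_of_ne hGN hne))

theorem dimP1_le_card_verts (K : SC α) : K.dimP1 ≤ K.verts.card :=
  Finset.sup_le fun F hF => card_le_card (K.subset_verts F hF)

theorem exists_card_eq_dimP1 (h0 : ∅ ∈ K.faces) : ∃ F ∈ K.faces, F.card = K.dimP1 := by
  obtain ⟨F, hF, h⟩ := exists_mem_eq_sup K.faces ⟨∅, h0⟩ card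
  exact ⟨F, hF, h.symm⟩

theorem card_verts_sub_dimP1_le_card_minNonFaces (h0 : ∅ ∈ K.faces) :
    K.verts.card - K.dimP1 ≤ K.minNonFaces.card := by
  obtain ⟨F, hF, hFcard⟩ := exists_card_eq_dimP1 h0
  rw [← hFcard, ← card_sdiff_of_subset (K.subset_verts F hF)]
  -- each vertex `v` outside the facet `F` lies in a minimal non-face contained in `F ∪ {v}`
  refine card_le_card_of_forall_subsingleton (fun v N => v ∈ N ∧ N ⊆ insert v F)
    (fun v hv => ?_) (fun N _ u hu w hw => ?_)
  · rw [mem_sdiff] at hv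
    have hvF : insert v F ∉ K.faces := fun hvF => by
      have : (insert v F).card ≤ K.dimP1 := le_sup hvF
      rw [card_insert_of_notMem hv.2] at this
      omega
    obtain ⟨N, hNsub, hN⟩ :=
      exists_minNonFaces_subset (insert_subset hv.1 (K.subset_verts F hF)) hvF
    refine ⟨N, hN, ?_, hNsub⟩
    by_contra hvN
    exact (mem_minNonFaces.1 hN).2.1
      (K.down_closed F hF N ((subset_insert_iff_of_notMem hvN).1 hNsub))
  · exact (mem_insert.1 (hw.2.2 hu.2.1)).resolve_right (mem_sdiff.1 hu.1).2

theorem mT_zero (K : SC α) : K.mT 0 = 0 :=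
  Nat.eq_zero_of_le_zero (Nat.sInf_le ⟨∅, empty_subset _, card_empty, by simp⟩)

theorem mT_card_le {T : Finset (Finset α)} (hT : T ⊆ K.minNonFaces) :
    K.mT T.card ≤ (T.sup id).card :=
  Nat.sInf_le ⟨T, hT, rfl, rfl⟩

theorem exists_card_sup_eq_mT {a : ℕ} (ha : a ≤ K.minNonFaces.card) :
    ∃ T ⊆ K.minNonFaces, T.card = a ∧ (T.sup id).card = K.mT a := by
  obtain ⟨T, hT, hTa⟩ := exists_subset_card_eq ha
  exact Nat.sInf_mem (s := {n | ∃ T ⊆ K.minNonFaces, T.card = a ∧ (T.sup id).card = n})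
    ⟨_, T, hT, hTa, rfl⟩

theorem taylorLBval_nonneg (K : SC α) : 0 ≤ K.taylorLBval := by
  unfold taylorLBval
  positivity

theorem empty_mem_faces_of_taylorLB (h : TaylorLB K) : ∅ ∈ K.faces := by
  by_contra h0
  have hfaces : K.faces = ∅ := eq_empty_of_forall_notMem fun F hF =>
    h0 (K.down_closed F hF ∅ (empty_subset F))
  have hverts : K.verts = ∅ := eq_empty_of_forall_notMem fun v hv => by
    simpa [hfaces] using K.singleton_mem v hv
  norm_num [TaylorLB, taylorLBval, fCard, dimP1, hfaces, hverts] at h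

end Invariants

theorem disjoint_minNonFaces {K K' : SC α} (hV : Disjoint K.verts K'.verts)
    (h0 : ∅ ∈ K.faces) : Disjoint K.minNonFaces K'.minNonFaces := by
  refine disjoint_left.2 fun N hN hN' => ?_
  have hN0 : N = ∅ := (disjoint_self_iff_empty N).1
    (hV.mono (mem_minNonFaces.1 hN).1 (mem_minNonFaces.1 hN').1)
  exact (mem_minNonFaces.1 hN).2.1 (hN0 ▸ h0)

structure IsJoin (K K' J : SC α) : Prop where
  disjoint : Disjoint K.verts K'.verts
  verts_eq : J.verts = K.verts ∪ K'.verts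
  faces_eq : J.faces = (K.faces ×ˢ K'.faces).image (fun p => p.1 ∪ p.2)

namespace IsJoin

variable {K K' J : SC α}

theorem mem_faces (h : IsJoin K K' J) {F : Finset α} :
    F ∈ J.faces ↔ ∃ A ∈ K.faces, ∃ B ∈ K'.faces, A ∪ B = F := by
  simp [h.faces_eq, and_assoc]

theorem symm (h : IsJoin K K' J) : IsJoin K' K J where
  disjoint := h.disjoint.symm
  verts_eq := h.verts_eq.trans (union_comm _ _)
  faces_eq := by
    ext F
    rw [h.mem_faces]
    simp only [mem_image, mem_product, Prod.exists]
    constructor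
    · rintro ⟨A, hA, B, hB, rfl⟩
      exact ⟨B, A, ⟨hB, hA⟩, union_comm _ _⟩
    · rintro ⟨B, A, ⟨hB, hA⟩, rfl⟩
      exact ⟨A, hA, B, hB, union_comm _ _⟩

theorem card_union (h : IsJoin K K' J) {A B : Finset α} (hA : A ∈ K.faces)
    (hB : B ∈ K'.faces) : (A ∪ B).card = A.card + B.card :=
  card_union_of_disjoint (h.disjoint.mono (K.subset_verts A hA) (K'.subset_verts B hB))

theorem union_inter_verts_left (h : IsJoin K K' J) {A B : Finset α} (hA : A ∈ K.faces)
    (hB : B ∈ K'.faces) : (A ∪ B) ∩ K.verts = A := by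
  rw [union_inter_distrib_right, inter_eq_left.2 (K.subset_verts A hA),
    disjoint_iff_inter_eq_empty.1 (h.disjoint.symm.mono_left (K'.subset_verts B hB)),
    union_empty]

theorem injOn_union (h : IsJoin K K' J) :
    Set.InjOn (fun p : Finset α × Finset α => p.1 ∪ p.2) ↑(K.faces ×ˢ K'.faces) := by
  rintro ⟨A, B⟩ hAB ⟨C, D⟩ hCD hEq
  simp only [coe_product, Set.mem_prod, mem_coe] at hAB hCD hEq
  refine Prod.ext ?_ ?_
  · rw [← h.union_inter_verts_left hAB.1 hAB.2, hEq, h.union_inter_verts_left hCD.1 hCD.2]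
  · rw [← h.symm.union_inter_verts_left hAB.2 hAB.1, union_comm, hEq, union_comm,
      h.symm.union_inter_verts_left hCD.2 hCD.1]

theorem faces_subset_left (h : IsJoin K K' J) (h0' : ∅ ∈ K'.faces) : K.faces ⊆ J.faces :=
  fun A hA => h.mem_faces.2 ⟨A, hA, ∅, h0', union_empty A⟩

theorem mem_faces_left_of_subset (h : IsJoin K K' J) {F : Finset α} (hF : F ∈ J.faces)
    (hFK : F ⊆ K.verts) : F ∈ K.faces := by
  obtain ⟨A, hA, B, hB, rfl⟩ := h.mem_faces.1 hF
  rwa [← inter_eq_left.2 hFK, h.union_inter_verts_left hA hB]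

theorem minNonFaces_left_subset (h : IsJoin K K' J) (h0' : ∅ ∈ K'.faces) :
    K.minNonFaces ⊆ J.minNonFaces := by
  intro N hN
  obtain ⟨hNK, hNf, hNmin⟩ := mem_minNonFaces.1 hN
  exact mem_minNonFaces.2 ⟨hNK.trans (h.verts_eq ▸ subset_union_left),
    fun hNJ => hNf (h.mem_faces_left_of_subset hNJ hNK),
    fun G hG hne => h.faces_subset_left h0' (hNmin G hG hne)⟩

theorem dimP1_eq (h : IsJoin K K' J) (h0 : ∅ ∈ K.faces) (h0' : ∅ ∈ K'.faces) :
    J.dimP1 = K.dimP1 + K'.dimP1 := by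
  obtain ⟨F, hF, hFcard⟩ := exists_card_eq_dimP1 h0
  obtain ⟨F', hF', hF'card⟩ := exists_card_eq_dimP1 h0'
  refine le_antisymm (Finset.sup_le fun G hG => ?_) ?_
  · obtain ⟨A, hA, B, hB, rfl⟩ := h.mem_faces.1 hG
    exact (card_union_le A B).trans (add_le_add (le_sup hA) (le_sup hB))
  · rw [← hFcard, ← hF'card, ← h.card_union hF hF']
    exact le_sup (h.mem_faces.2 ⟨F, hF, F', hF', rfl⟩)

theorem fCard_dimP1_eq (h : IsJoin K K' J) (h0 : ∅ ∈ K.faces) (h0' : ∅ ∈ K'.faces) :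
    J.fCard J.dimP1 = K.fCard K.dimP1 * K'.fCard K'.dimP1 := by
  have hfacets : (K.faces ×ˢ K'.faces).filter
        (fun p => (p.1 ∪ p.2).card = K.dimP1 + K'.dimP1) =
      K.faces.filter (·.card = K.dimP1) ×ˢ K'.faces.filter (·.card = K'.dimP1) := by
    ext ⟨A, B⟩
    simp only [mem_filter, mem_product]
    constructor
    · rintro ⟨⟨hA, hB⟩, hAB⟩
      have : A.card ≤ K.dimP1 := le_sup hA
      have : B.card ≤ K'.dimP1 := le_sup hB
      rw [h.card_union hA hB] at hAB
      exact ⟨⟨hA, by omega⟩, hB, by omega⟩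
    · rintro ⟨⟨hA, hAc⟩, hB, hBc⟩
      exact ⟨⟨hA, hB⟩, by rw [h.card_union hA hB, hAc, hBc]⟩
  unfold fCard
  rw [h.dimP1_eq h0 h0', h.faces_eq, filter_image,
    card_image_of_injOn (h.injOn_union.mono (coe_subset.2 (filter_subset _ _))), hfacets,
    card_product]

theorem card_verts_sub_dimP1 (h : IsJoin K K' J) (h0 : ∅ ∈ K.faces) (h0' : ∅ ∈ K'.faces) :
    J.verts.card - J.dimP1 = (K.verts.card - K.dimP1) + (K'.verts.card - K'.dimP1) := by
  have := K.dimP1_le_card_verts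
  have := K'.dimP1_le_card_verts
  rw [h.dimP1_eq h0 h0', h.verts_eq, card_union_of_disjoint h.disjoint]
  omega

theorem mT_add_le (h : IsJoin K K' J) (h0 : ∅ ∈ K.faces) (h0' : ∅ ∈ K'.faces) {a b : ℕ}
    (ha : a ≤ K.minNonFaces.card) (hb : b ≤ K'.minNonFaces.card) :
    J.mT (a + b) ≤ K.mT a + K'.mT b := by
  obtain ⟨T, hT, rfl, hTm⟩ := exists_card_sup_eq_mT ha
  obtain ⟨T', hT', rfl, hT'm⟩ := exists_card_sup_eq_mT hb
  have hTJ : T ∪ T' ⊆ J.minNonFaces := union_subset (hT.trans (h.minNonFaces_left_subset h0'))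
    (hT'.trans (h.symm.minNonFaces_left_subset h0))
  calc J.mT (T.card + T'.card)
      = J.mT (T ∪ T').card := by
        rw [card_union_of_disjoint ((disjoint_minNonFaces h.disjoint h0).mono hT hT')]
    _ ≤ ((T ∪ T').sup id).card := mT_card_le hTJ
    _ ≤ (T.sup id).card + (T'.sup id).card := by rw [sup_union]; exact card_union_le _ _
    _ = K.mT T.card + K'.mT T'.card := by rw [hTm, hT'm]

theorem taylorLBval_le_mul (h : IsJoin K K' J) (h0 : ∅ ∈ K.faces) (h0' : ∅ ∈ K'.faces) :
    J.taylorLBval ≤ K.taylorLBval * K'.taylorLBval := by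
  unfold taylorLBval
  rw [h.card_verts_sub_dimP1 h0 h0']
  generalize hm : K.verts.card - K.dimP1 = m
  generalize hm' : K'.verts.card - K'.dimP1 = m'
  have hprod : ∏ i ∈ Icc 1 (m + m'), J.mT i ≤
      (m + m').choose m * (∏ a ∈ Icc 1 m, K.mT a) * ∏ b ∈ Icc 1 m', K'.mT b :=
    prod_Icc_le_choose_mul_prod_mul_prod K.mT_zero K'.mT_zero fun a ha b hb =>
      h.mT_add_le h0 h0' (hm ▸ ha |>.trans (card_verts_sub_dimP1_le_card_minNonFaces h0))
        (hm' ▸ hb |>.trans (card_verts_sub_dimP1_le_card_minNonFaces h0'))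
  calc (∏ i ∈ Icc 1 (m + m'), (J.mT i : ℚ)) / (m + m').factorial
      ≤ ((m + m').choose m * (∏ a ∈ Icc 1 m, K.mT a) * ∏ b ∈ Icc 1 m', K'.mT b : ℕ) /
          (m + m').factorial := by
        gcongr
        exact_mod_cast hprod
    _ = _ := by
        push_cast
        rw [Nat.cast_add_choose]
        field_simp

end IsJoin

end SC

open SC in
/-- If `K` and `K'` are simplicial complexes on disjoint vertex sets and both satisfy the
Taylor lower bound, then their join `J = K ⋆ K'` satisfies the Taylor lower bound. -/
theorem taylorLB_join {α : Type*} [DecidableEq α] (K K' J : SC α)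
    (hdisj : Disjoint K.verts K'.verts)
    (hV : J.verts = K.verts ∪ K'.verts)
    (hF : J.faces = (K.faces ×ˢ K'.faces).image (fun p => p.1 ∪ p.2))
    (hK : TaylorLB K) (hK' : TaylorLB K') :
    TaylorLB J := by
  have hJ : IsJoin K K' J := ⟨hdisj, hV, hF⟩
  have h0 := empty_mem_faces_of_taylorLB hK
  have h0' := empty_mem_faces_of_taylorLB hK'
  rw [TaylorLB, hJ.fCard_dimP1_eq h0 h0', Nat.cast_mul]
  calc J.taylorLBval ≤ K.taylorLBval * K'.taylorLBval := hJ.taylorLBval_le_mul h0 h0'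
    _ ≤ K.fCard K.dimP1 * K'.fCard K'.dimP1 :=
      mul_le_mul hK hK' K'.taylorLBval_nonneg (Nat.cast_nonneg _)
end
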